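/- arXiv:2305.07274 — 6 statements merged into one kernel-verified Lean document; each statement's English description precedes it below -/
import Mathlib

section
/- For every positive integer n and every quaternary word x ∈ Σ^n, the synthesis time of x equals the L1-norm of its differential word: S(x) = ||D(x)||. -/
/-- A list of integers is quaternary if all entries lie in {1,2,3,4}. -/
def IsQ (x : List ℤ) : Prop := ∀ a ∈ x, 1 ≤ a ∧ a ≤ 4

/-- The alternating quaternary supersequence 1,2,3,4,1,2,3,4,... of length `T`. -/
def altSeq (T : ℕ) : List ℤ := (List.range T).map (fun i => ((i % 4 : ℕ) : ℤ) + 1)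

/-- The synthesis time of `x`: the least `T` such that `x` is a subsequence of `altSeq T`. -/
noncomputable def synTime (x : List ℤ) : ℕ := sInf {T : ℕ | x.Sublist (altSeq T)}

/-- The shifted modulo: the unique element of {1,2,3,4} congruent to `a` mod 4. -/
def mods4 (a : ℤ) : ℤ := (a - 1) % 4 + 1

/-- The differential word of `x`. -/
def diffWord (x : List ℤ) : List ℤ := List.zipWith (fun p c => mods4 (c - p)) (0 :: x) x

/-- The set of quaternary words of length `n` with synthesis time at most `T`. -/
def W (n : ℕ) (T : ℤ) : Set (List ℤ) :=
  {x | x.length = n ∧ IsQ x ∧ (synTime x : ℤ) ≤ T}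

/-- `A n T` is the number of quaternary words of length `n` with synthesis time at most `T`. -/
noncomputable def A (n : ℕ) (T : ℤ) : ℕ := (W n T).ncard

/-- The single-indel ball of `x`. -/
def ball (x : List ℤ) : Set (List ℤ) :=
  {y | y = x ∨ (y.length + 1 = x.length ∧ y.Sublist x) ∨
       (x.length + 1 = y.length ∧ IsQ y ∧ x.Sublist y)}

/-- The auxiliary binary sequence of `x` (as 0/1 naturals). -/
def auxSeq (x : List ℤ) : List ℕ :=
  List.zipWith (fun a b => if a ≤ b then 1 else 0) x x.tail

/-- VT syndrome of a binary word: `∑ i·w_i` with positions starting from 1. -/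
def vtSyn (w : List ℕ) : ℕ := ∑ i ∈ Finset.range w.length, (i + 1) * w.getD i 0

/-- The quaternary VT code. -/
def VTn (n : ℕ) (a : ZMod n) (b : ZMod 4) : Set (List ℤ) :=
  {x | x.length = n ∧ IsQ x ∧ ((vtSyn (auxSeq x) : ℕ) : ZMod n) = a ∧
       ((x.sum : ℤ) : ZMod 4) = b}

/-- The quaternary VT code with synthesis time constraint. -/
def VTnT (n : ℕ) (a : ZMod n) (b : ZMod 4) (T : ℤ) : Set (List ℤ) :=
  {x ∈ VTn n a b | (synTime x : ℤ) ≤ T}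

/-! Embedding `x` greedily into `1,2,3,4,1,2,…` is optimal. From a position `≡ p (mod 4)` the
next occurrence of the symbol `c` comes exactly `mods4 (c - p)` steps later, so the greedy
embedding ends at position `∑ᵢ mods4 (xᵢ - xᵢ₋₁) = ‖D(x)‖` (with `x₀ = 0`). -/

/-- Time needed to print `x` after having last printed a symbol `≡ p (mod 4)`. -/
def costFrom : ℤ → List ℤ → ℤ
  | _, [] => 0
  | p, c :: xs => mods4 (c - p) + costFrom c xs

lemma one_le_mods4 (a : ℤ) : 1 ≤ mods4 a := by
  unfold mods4; omega

lemma costFrom_nonneg : ∀ (p : ℤ) (x : List ℤ), 0 ≤ costFrom p x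
  | _, [] => le_rfl
  | p, c :: xs => by
    have := one_le_mods4 (c - p)
    have := costFrom_nonneg c xs
    simp only [costFrom]; omega

lemma sum_zipWith_mods4_sub_eq_costFrom : ∀ (p : ℤ) (x : List ℤ),
    (List.zipWith (fun p c => mods4 (c - p)) (p :: x) x).sum = costFrom p x
  | _, [] => rfl
  | p, c :: xs => by
    simp only [List.zipWith, List.sum_cons, costFrom, sum_zipWith_mods4_sub_eq_costFrom c xs]

lemma diffWord_sum (x : List ℤ) : (diffWord x).sum = costFrom 0 x :=
  sum_zipWith_mods4_sub_eq_costFrom 0 x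

lemma drop_altSeq_eq_cons {p T : ℕ} (hp : p < T) :
    (altSeq T).drop p = (((p % 4 : ℕ) : ℤ) + 1) :: (altSeq T).drop (p + 1) := by
  rw [List.drop_eq_getElem_cons (by simpa [altSeq])]
  simp [altSeq]

lemma IsQ.of_cons {c : ℤ} {xs : List ℤ} (hx : IsQ (c :: xs)) : IsQ xs :=
  fun a ha => hx a (List.mem_cons_of_mem c ha)

lemma costFrom_congr {a b : ℤ} (h : a ≡ b [ZMOD 4]) (x : List ℤ) :
    costFrom a x = costFrom b x := by
  cases x with
  | nil => rfl
  | cons c xs =>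
    simp only [costFrom, mods4, add_left_inj]
    rw [Int.ModEq] at h
    omega

/-- Either `c` is the next symbol `p % 4 + 1` and is printed now, or the position `p` is skipped,
which lowers the first gap `mods4 (c - p)` by one. -/
lemma sublist_drop_altSeq_iff {x : List ℤ} (hx : IsQ x) (p k : ℕ) :
    x.Sublist ((altSeq (p + k)).drop p) ↔ costFrom p x ≤ k := by
  induction k generalizing p x with
  | zero =>
    cases x with
    | nil => simp [costFrom]
    | cons c xs =>
      have := one_le_mods4 (c - p)
      have := costFrom_nonneg c xs
      rw [add_zero, List.drop_eq_nil_of_le (by simp [altSeq]), List.sublist_nil, costFrom]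
      simp only [reduceCtorEq, false_iff, Nat.cast_zero]
      omega
  | succ k ih =>
    cases x with
    | nil => simpa [costFrom] using Nat.cast_nonneg (k + 1)
    | cons c xs =>
      rw [drop_altSeq_eq_cons (by omega), add_comm k 1, ← add_assoc, List.sublist_cons_iff,
        ih hx (p + 1)]
      simp only [List.cons.injEq, existsAndEq, and_true]
      by_cases htake : c = ((p % 4 : ℕ) : ℤ) + 1
      · subst htake
        have := costFrom_nonneg (((p % 4 : ℕ) : ℤ) + 1) xs
        have hphase : ((p + 1 : ℕ) : ℤ) ≡ ((p % 4 : ℕ) : ℤ) + 1 [ZMOD 4] := by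
          unfold Int.ModEq; push_cast; omega
        rw [ih hx.of_cons, costFrom_congr hphase xs]
        simp only [costFrom, mods4, true_and]
        push_cast
        omega
      · have hc := hx c List.mem_cons_self
        simp only [htake, false_and, or_false, costFrom, mods4]
        push_cast
        omega

lemma synTime_eq_costFrom {x : List ℤ} (hx : IsQ x) : (synTime x : ℤ) = costFrom 0 x := by
  have hmem (T : ℕ) : x.Sublist (altSeq T) ↔ costFrom 0 x ≤ T := by
    simpa using sublist_drop_altSeq_iff hx 0 T
  have hcost := costFrom_nonneg 0 x
  have hcost_mem : x.Sublist (altSeq (costFrom 0 x).toNat) := (hmem _).2 (by omega)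
  have hle : synTime x ≤ (costFrom 0 x).toNat := Nat.sInf_le hcost_mem
  have hmin : x.Sublist (altSeq (synTime x)) :=
    Nat.sInf_mem (s := {T | x.Sublist (altSeq T)}) ⟨_, hcost_mem⟩
  have hge := (hmem _).1 hmin
  omega

theorem synTime_eq_sum_diffWord_general (x : List ℤ) (hq : IsQ x) :
    (synTime x : ℤ) = (diffWord x).sum := by
  rw [synTime_eq_costFrom hq, diffWord_sum]

/-- for every quaternary word `x` of positive length `n`,
the synthesis time of `x` equals the L1-norm of its differential word. -/
theorem synTime_eq_sum_diffWord (n : ℕ) (hn : 0 < n) (x : List ℤ)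
    (hlen : x.length = n) (hq : IsQ x) :
    (synTime x : ℤ) = (diffWord x).sum :=
  synTime_eq_sum_diffWord_general x hq
end

section
/- For every positive integer n, every a ∈ ℤ_n and b ∈ ℤ_4, and every pair of words x, y ∈ VT_n(a,b): if B(x) ∩ B(y) ≠ ∅ then x = y. In other words, the quaternary code VT_n(a,b) corrects a single deletion or a single insertion. -/
/-! A single insertion reduces to a single deletion: two distinct words of length `n` inside a
common word of length `n + 1` share a subsequence of length `n - 1`. So let `z` of length `n - 1`
be a subsequence of both `x` and `y`. The symbol sum modulo 4 identifies the deleted symbol `s`,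
since it lies in `{1, 2, 3, 4}`. Deleting a symbol from a word deletes one bit from its
auxiliary sequence, so `x̃` and `ỹ` arise from the same binary word by inserting one bit; such an
insertion raises the VT syndrome by at most `n - 1`, and the classical Varshamov–Tenengolts
argument gives `x̃ = ỹ`. Finally, if inserting `s` into `z` at two positions gives the same
auxiliary sequence, the comparisons force every symbol between the two positions to equal `s`,
so both insertions give the same word. -/

namespace List

variable {α : Type*}

theorem exists_eq_append_cons_of_sublist {z x : List α} (h : z.Sublist x)
    (hlen : z.length + 1 = x.length) : ∃ l₁ a l₂, z = l₁ ++ l₂ ∧ x = l₁ ++ a :: l₂ := by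
  induction h with
  | slnil => simp at hlen
  | @cons z x a h _ =>
    exact ⟨[], a, z, rfl, by rw [h.eq_of_length (by simpa using hlen)]; rfl⟩
  | cons_cons a _ ih =>
    obtain ⟨l₁, b, l₂, rfl, rfl⟩ := ih (by simpa using hlen)
    exact ⟨a :: l₁, b, l₂, rfl, rfl⟩

theorem exists_eq_append_of_append_eq_append {l₁ l₂ k₁ k₂ : List α} (h : l₁ ++ l₂ = k₁ ++ k₂)
    (hlen : l₁.length ≤ k₁.length) : ∃ m, k₁ = l₁ ++ m ∧ l₂ = m ++ k₂ := by
  rcases List.append_eq_append_iff.1 h with h | ⟨m, rfl, rfl⟩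
  · exact h
  · obtain rfl : m = [] := by simpa using hlen
    exact ⟨[], by simp, by simp⟩

theorem append_cons_replicate_append (l₁ l₂ : List α) (a : α) (r : ℕ) :
    l₁ ++ a :: (replicate r a ++ l₂) = l₁ ++ replicate r a ++ a :: l₂ := by
  rw [← cons_append, ← replicate_succ, replicate_succ']
  simp

theorem eq_or_exists_common_sublist_of_append_cons_eq {l₁ l₂ k₁ k₂ : List α} {c d : α}
    (h : l₁ ++ c :: l₂ = k₁ ++ d :: k₂) :
    l₁ ++ l₂ = k₁ ++ k₂ ∨ ∃ z : List α,
      z.Sublist (l₁ ++ l₂) ∧ z.Sublist (k₁ ++ k₂) ∧ z.length + 1 = (l₁ ++ l₂).length := by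
  wlog hlen : l₁.length ≤ k₁.length generalizing l₁ l₂ k₁ k₂ c d
  · have hl : (k₁ ++ k₂).length = (l₁ ++ l₂).length := by
      have := congrArg length h
      simp only [length_append, length_cons] at this ⊢
      omega
    rcases this h.symm (by omega) with h' | ⟨z, hzy, hzx, hz⟩
    · exact .inl h'.symm
    · exact .inr ⟨z, hzx, hzy, hz.trans hl⟩
  obtain ⟨m, rfl, hm⟩ := exists_eq_append_of_append_eq_append h hlen
  cases m with
  | nil => simp_all
  | cons c' m =>
    obtain ⟨-, rfl⟩ := cons_eq_cons.1 hm
    exact .inr ⟨l₁ ++ (m ++ k₂), by simp, by simp, by simp; omega⟩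

theorem eq_or_exists_common_sublist {x y v : List α} (hx : x.Sublist v) (hy : y.Sublist v)
    (hxv : x.length + 1 = v.length) (hyv : y.length + 1 = v.length) :
    x = y ∨ ∃ z : List α, z.Sublist x ∧ z.Sublist y ∧ z.length + 1 = x.length := by
  obtain ⟨l₁, c, l₂, rfl, rfl⟩ := exists_eq_append_cons_of_sublist hx hxv
  obtain ⟨k₁, d, k₂, rfl, hv⟩ := exists_eq_append_cons_of_sublist hy hyv
  exact eq_or_exists_common_sublist_of_append_cons_eq hv

theorem sum_range_getD {M : Type*} [AddCommMonoid M] (l : List M) :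
    ∑ i ∈ Finset.range l.length, l.getD i 0 = l.sum := by
  induction l with
  | nil => simp
  | cons a l ih =>
    rw [length_cons, Finset.sum_range_succ']
    simp only [getD_cons_succ, getD_cons_zero, ih, sum_cons, add_comm]

theorem sum_append_cons {M : Type*} [AddCommMonoid M] (l₁ l₂ : List M) (a : M) :
    (l₁ ++ a :: l₂).sum = (l₁ ++ l₂).sum + a := by
  simp only [sum_append, sum_cons]
  abel

theorem eq_replicate_one_of_sum_eq_length {l : List ℕ} (hl : ∀ b ∈ l, b ≤ 1)
    (h : l.sum = l.length) : l = replicate l.length 1 := by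
  induction l with
  | nil => rfl
  | cons a l ih =>
    simp only [forall_mem_cons, sum_cons, length_cons] at hl h
    have hsum : l.sum ≤ l.length := by simpa using l.sum_le_card_nsmul 1 hl.2
    rw [length_cons, replicate_succ, ← ih hl.2 (by omega)]
    congr
    omega

end List

theorem vtSyn_cons (a : ℕ) (w : List ℕ) : vtSyn (a :: w) = vtSyn w + w.sum + a := by
  simp only [vtSyn, List.length_cons, Finset.sum_range_succ', List.getD_cons_succ,
    List.getD_cons_zero, add_mul, one_mul, Finset.sum_add_distrib, List.sum_range_getD]
  ring

theorem vtSyn_append_cons (m₁ m₂ : List ℕ) (c : ℕ) :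
    vtSyn (m₁ ++ c :: m₂) = vtSyn (m₁ ++ m₂) + ((m₁.length + 1) * c + m₂.sum) := by
  induction m₁ with
  | nil => simp [vtSyn_cons]; ring
  | cons a m₁ ih =>
    simp only [List.cons_append, vtSyn_cons, ih, List.sum_append, List.sum_cons, List.length_cons]
    ring

theorem length_succ_mul_add_sum_le {m₁ m₂ : List ℕ} {c : ℕ} (hc : c ≤ 1)
    (hm : ∀ b ∈ m₂, b ≤ 1) : (m₁.length + 1) * c + m₂.sum ≤ (m₁ ++ c :: m₂).length := by
  have := m₂.sum_le_card_nsmul 1 hm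
  simp only [smul_eq_mul, mul_one, List.length_append, List.length_cons] at this ⊢
  interval_cases c <;> omega

theorem eq_of_vtSyn_eq_of_append_cons {m₁ m₂ k₁ k₂ : List ℕ} {c d : ℕ}
    (hw : ∀ b ∈ m₁ ++ m₂, b ≤ 1) (hc : c ≤ 1) (hd : d ≤ 1) (hmk : m₁ ++ m₂ = k₁ ++ k₂)
    (h : vtSyn (m₁ ++ c :: m₂) = vtSyn (k₁ ++ d :: k₂)) : m₁ ++ c :: m₂ = k₁ ++ d :: k₂ := by
  wlog hlen : m₁.length ≤ k₁.length generalizing m₁ m₂ k₁ k₂ c d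
  · exact (this (hmk ▸ hw) hd hc hmk.symm h.symm (by omega)).symm
  obtain ⟨r, rfl, rfl⟩ := List.exists_eq_append_of_append_eq_append hmk hlen
  have hr : ∀ b ∈ r, b ≤ 1 := fun b hb => hw b (by simp [hb])
  have hrsum : r.sum ≤ r.length := by simpa using r.sum_le_card_nsmul 1 hr
  rw [vtSyn_append_cons, vtSyn_append_cons, ← hmk] at h
  simp only [List.sum_append, List.length_append] at h
  obtain ⟨rfl, hrc⟩ : c = d ∧ r = List.replicate r.length c := by
    interval_cases c <;> interval_cases d
    · exact ⟨rfl, List.eq_replicate_of_mem fun b hb => List.sum_eq_zero_iff.1 (by omega) b hb⟩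
    · omega
    · omega
    · exact ⟨rfl, List.eq_replicate_one_of_sum_eq_length hr (by omega)⟩
  rw [hrc, List.append_cons_replicate_append]

theorem eq_of_vtSyn_modEq {n : ℕ} {w u u' : List ℕ} (hu : ∀ b ∈ u, b ≤ 1)
    (hu' : ∀ b ∈ u', b ≤ 1) (hwu : w.Sublist u) (hwu' : w.Sublist u')
    (hlu : w.length + 1 = u.length) (hlu' : w.length + 1 = u'.length) (hn : u.length < n)
    (h : vtSyn u ≡ vtSyn u' [MOD n]) : u = u' := by
  obtain ⟨m₁, c, m₂, rfl, rfl⟩ := List.exists_eq_append_cons_of_sublist hwu hlu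
  obtain ⟨k₁, d, k₂, hw, rfl⟩ := List.exists_eq_append_cons_of_sublist hwu' hlu'
  have hc : c ≤ 1 := hu c (by simp)
  have hd : d ≤ 1 := hu' d (by simp)
  -- inserting a bit raises the syndrome by less than `n`, so the congruence of increments is
  -- an equality
  have hinc : (m₁.length + 1) * c + m₂.sum = (k₁.length + 1) * d + k₂.sum := by
    rw [vtSyn_append_cons, vtSyn_append_cons, hw] at h
    refine (Nat.ModEq.add_left_cancel' _ h).eq_of_lt_of_lt ?_ ?_
    · exact (length_succ_mul_add_sum_le hc fun b hb => hu b (by simp [hb])).trans_lt hn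
    · refine (length_succ_mul_add_sum_le hd fun b hb => hu' b (by simp [hb])).trans_lt ?_
      rwa [← hlu', hlu]
  refine eq_of_vtSyn_eq_of_append_cons (fun b hb => hu b (hwu.subset hb)) hc hd hw ?_
  rw [vtSyn_append_cons, vtSyn_append_cons, hw, hinc]

@[simp]
theorem auxSeq_nil : auxSeq [] = [] := rfl

@[simp]
theorem auxSeq_singleton (a : ℤ) : auxSeq [a] = [] := rfl

@[simp]
theorem auxSeq_cons_cons (a b : ℤ) (l : List ℤ) :
    auxSeq (a :: b :: l) = (if a ≤ b then 1 else 0) :: auxSeq (b :: l) := rfl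

theorem length_auxSeq (l : List ℤ) : (auxSeq l).length = l.length - 1 := by
  simp [auxSeq]

theorem auxSeq_eq_nil_iff {l : List ℤ} : auxSeq l = [] ↔ l.length ≤ 1 := by
  rw [← List.length_eq_zero_iff, length_auxSeq]
  omega

theorem auxSeq_le_one : ∀ (l : List ℤ), ∀ b ∈ auxSeq l, b ≤ 1
  | [] => by simp
  | [_] => by simp
  | a :: b :: l => by
    simp only [auxSeq_cons_cons, List.forall_mem_cons]
    exact ⟨by split <;> omega, auxSeq_le_one (b :: l)⟩

/-- The bit comparing the two neighbours of the deleted symbol agrees with one of the two bits it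
replaces, by transitivity of `≤` and of `>`. -/
theorem auxSeq_sublist_auxSeq_append_cons (l₁ l₂ : List ℤ) (s : ℤ) :
    (auxSeq (l₁ ++ l₂)).Sublist (auxSeq (l₁ ++ s :: l₂)) := by
  induction l₁ with
  | nil =>
    cases l₂ with
    | nil => simp
    | cons b l₂ => simp
  | cons a l₁ ih =>
    cases l₁ with
    | nil =>
      cases l₂ with
      | nil => simp
      | cons b l₂ =>
        simp only [List.nil_append, List.cons_append, auxSeq_cons_cons]
        split_ifs <;> first | omega | simp
    | cons a' l₁ =>
      simp only [List.cons_append, auxSeq_cons_cons] at ih ⊢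
      exact ih.cons_cons _

theorem auxSeq_eq_of_auxSeq_append_eq (l : List ℤ) {u v : List ℤ} (hu : u ≠ []) (hv : v ≠ [])
    (h : auxSeq (l ++ u) = auxSeq (l ++ v)) : auxSeq u = auxSeq v := by
  induction l with
  | nil => simpa using h
  | cons a l ih =>
    obtain ⟨b, t, hb⟩ := List.exists_cons_of_ne_nil (List.append_ne_nil_of_right_ne_nil l hu)
    obtain ⟨b', t', hb'⟩ := List.exists_cons_of_ne_nil (List.append_ne_nil_of_right_ne_nil l hv)
    rw [List.cons_append, List.cons_append, hb, hb', auxSeq_cons_cons, auxSeq_cons_cons] at h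
    exact ih (by rw [hb, hb']; exact (List.cons.inj h).2)

/-- Comparing the two sides entrywise, each comparison bit of consecutive symbols of
`a :: m ++ [s]` equals the next one. -/
theorem isChain_of_auxSeq_cons_eq (m k : List ℤ) (a s : ℤ)
    (h : auxSeq (a :: (m ++ k)) = auxSeq (m ++ s :: k)) :
    (a :: (m ++ [s])).IsChain (· ≤ ·) ∨ (a :: (m ++ [s])).IsChain (· > ·) := by
  induction m generalizing a with
  | nil =>
    rcases le_or_gt a s with has | has
    · exact .inl (by simp [has])
    · exact .inr (by simp [has])
  | cons b m ih =>
    obtain ⟨c, t, hc⟩ := List.exists_cons_of_ne_nil (List.append_ne_nil_of_right_ne_nil m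
      (List.cons_ne_nil s []))
    have hk : m ++ s :: k = c :: (t ++ k) := by
      rw [← List.singleton_append, ← List.append_assoc, hc]
      rfl
    rw [List.cons_append, List.cons_append, auxSeq_cons_cons, hk, auxSeq_cons_cons, ← hk] at h
    obtain ⟨hbit, htail⟩ := List.cons.inj h
    rw [List.cons_append, hc]
    rw [hc] at ih
    rcases ih b htail with hch | hch
    · have hbc : b ≤ c := (List.isChain_cons_cons.1 hch).1
      have hab : a ≤ b := by by_contra hab; simp [hab, hbc] at hbit
      exact .inl (List.isChain_cons_cons.2 ⟨hab, hch⟩)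
    · have hbc : b > c := (List.isChain_cons_cons.1 hch).1
      have hab : a > b := by by_contra hab; simp [not_lt.1 hab, not_le.2 hbc] at hbit
      exact .inr (List.isChain_cons_cons.2 ⟨hab, hch⟩)

theorem eq_replicate_of_auxSeq_cons_eq {m k : List ℤ} {s : ℤ}
    (h : auxSeq (s :: (m ++ k)) = auxSeq (m ++ s :: k)) : m = List.replicate m.length s := by
  rcases isChain_of_auxSeq_cons_eq m k s s h with hch | hch
  · obtain ⟨hs, hm⟩ := List.pairwise_cons.1 (List.isChain_iff_pairwise.1 hch)
    refine List.eq_replicate_of_mem fun b hb => le_antisymm ?_ (hs b (by simp [hb]))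
    exact (List.pairwise_append.1 hm).2.2 b hb s (by simp)
  · have := (List.pairwise_cons.1 (List.isChain_iff_pairwise.1 hch)).1 s (by simp)
    exact absurd this (lt_irrefl s)

theorem append_cons_eq_of_auxSeq_eq {l₁ l₂ k₁ k₂ : List ℤ} {s : ℤ} (hlk : l₁ ++ l₂ = k₁ ++ k₂)
    (h : auxSeq (l₁ ++ s :: l₂) = auxSeq (k₁ ++ s :: k₂)) : l₁ ++ s :: l₂ = k₁ ++ s :: k₂ := by
  wlog hlen : l₁.length ≤ k₁.length generalizing l₁ l₂ k₁ k₂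
  · exact (this hlk.symm h.symm (by omega)).symm
  obtain ⟨m, rfl, rfl⟩ := List.exists_eq_append_of_append_eq_append hlk hlen
  rw [List.append_assoc] at h
  rw [eq_replicate_of_auxSeq_cons_eq (auxSeq_eq_of_auxSeq_append_eq l₁ (by simp) (by simp) h),
    List.append_cons_replicate_append]

theorem eq_of_mem_VTn_of_common_sublist {n : ℕ} {a : ZMod n} {b : ZMod 4} {x y z : List ℤ}
    (hx : x ∈ VTn n a b) (hy : y ∈ VTn n a b) (hzx : z.Sublist x) (hzy : z.Sublist y)
    (hz : z.length + 1 = n) : x = y := by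
  obtain ⟨hxn, hxq, hxa, hxb⟩ := hx
  obtain ⟨hyn, hyq, hya, hyb⟩ := hy
  obtain ⟨l₁, s, l₂, rfl, rfl⟩ := List.exists_eq_append_cons_of_sublist hzx (by omega)
  obtain ⟨k₁, t, k₂, hlk, rfl⟩ := List.exists_eq_append_cons_of_sublist hzy (by omega)
  -- the sum modulo 4 determines the deleted symbol, as it lies in {1, 2, 3, 4}
  obtain rfl : s = t := by
    have hs := hxq s (by simp)
    have ht := hyq t (by simp)
    have hst := (ZMod.intCast_eq_intCast_iff _ _ 4).1 (hxb.trans hyb.symm)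
    rw [List.sum_append_cons, List.sum_append_cons, hlk, Int.ModEq] at hst
    omega
  refine append_cons_eq_of_auxSeq_eq hlk ?_
  rcases Nat.lt_or_ge n 2 with hn | hn
  · rw [auxSeq_eq_nil_iff.2 (by omega), auxSeq_eq_nil_iff.2 (by omega)]
  refine eq_of_vtSyn_modEq (auxSeq_le_one _) (auxSeq_le_one _)
    (auxSeq_sublist_auxSeq_append_cons l₁ l₂ s) (hlk ▸ auxSeq_sublist_auxSeq_append_cons k₁ k₂ s)
    ?_ ?_ ?_ ((ZMod.natCast_eq_natCast_iff _ _ _).1 (hxa.trans hya.symm))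
  all_goals simp only [length_auxSeq] at *; omega

theorem eq_or_exists_common_sublist_of_mem_ball {x y v : List ℤ} (hxy : x.length = y.length)
    (hvx : v ∈ ball x) (hvy : v ∈ ball y) :
    x = y ∨ ∃ z : List ℤ, z.Sublist x ∧ z.Sublist y ∧ z.length + 1 = x.length := by
  rcases hvx with rfl | ⟨hlx, hsx⟩ | ⟨hlx, -, hxv⟩ <;>
    rcases hvy with rfl | ⟨hly, hsy⟩ | ⟨hly, -, hyv⟩
  all_goals try (exfalso; omega)
  · exact .inl rfl
  · exact .inr ⟨v, hsx, hsy, hlx⟩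
  · exact List.eq_or_exists_common_sublist hxv hyv hlx hly

theorem VTn_single_indel_correcting_general (n : ℕ) (a : ZMod n) (b : ZMod 4)
    (x y : List ℤ) (hx : x ∈ VTn n a b) (hy : y ∈ VTn n a b)
    (h : (ball x ∩ ball y).Nonempty) :
    x = y := by
  obtain ⟨v, hvx, hvy⟩ := h
  rcases eq_or_exists_common_sublist_of_mem_ball (hx.1.trans hy.1.symm) hvx hvy with
    hxy | ⟨z, hzx, hzy, hz⟩
  · exact hxy
  · exact eq_of_mem_VTn_of_common_sublist hx hy hzx hzy (hz.trans hx.1)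

/-- the VT code `VT_n(a,b)` corrects a single deletion or insertion:
if the single-indel balls of two codewords intersect, the codewords are equal. -/
theorem VTn_single_indel_correcting (n : ℕ) (hn : 0 < n) (a : ZMod n) (b : ZMod 4)
    (x y : List ℤ) (hx : x ∈ VTn n a b) (hy : y ∈ VTn n a b)
    (h : (ball x ∩ ball y).Nonempty) :
    x = y :=
  VTn_single_indel_correcting_general n a b x y hx hy h
end

section
/- For every positive integer n and integer T with 2T ≥ 5n, we have A(n,T) ≥ 4^n / 2; that is, at least half of all quaternary words of length n have synthesis time at most T. -/
/-!
The cost of writing `x` greedily into the alternating sequence is the sum of its differential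
word, each letter `mods4 (xᵢ - xᵢ₋₁)` lying in `{1,2,3,4}`; this bounds the synthesis time. The
reflection `xᵢ ↦ i + 1 - xᵢ (mod 4)` is an involution on quaternary words that replaces every
differential letter `d` by `5 - d`, so the costs of `x` and of its reflection add up to `5n`.
Hence whenever `x` costs more than `T ≥ 5n/2`, its reflection costs less than `T`.
-/

theorem Finset.card_le_two_mul_card_filter_of_involutive {α : Type*} (p : α → Prop)
    [DecidablePred p] {s : Finset α} {f : α → α} (hf : ∀ x ∈ s, f x ∈ s)
    (hff : ∀ x ∈ s, f (f x) = x) (hp : ∀ x ∈ s, ¬ p x → p (f x)) :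
    s.card ≤ 2 * (s.filter p).card := by
  have hbad : (s.filter (¬ p ·)).card ≤ (s.filter p).card := by
    refine Finset.card_le_card_of_injOn f (fun x hx => ?_) (fun x hx y hy hxy => ?_)
    · simp only [Finset.coe_filter, Set.mem_ofPred_eq] at hx ⊢
      exact ⟨hf x hx.1, hp x hx.1 hx.2⟩
    · simp only [Finset.coe_filter, Set.mem_ofPred_eq] at hx hy
      rw [← hff x hx.1, hxy, hff y hy.1]
  have := s.card_filter_add_card_filter_not p
  omega

theorem mods4_mem_Icc (a : ℤ) : 1 ≤ mods4 a ∧ mods4 a ≤ 4 := by unfold mods4; omega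

theorem mods4_emod (a : ℤ) : mods4 a % 4 = a % 4 := by unfold mods4; omega

theorem mods4_congr {a b : ℤ} (h : a % 4 = b % 4) : mods4 a = mods4 b := by unfold mods4; omega

theorem mods4_of_mem_Icc {a : ℤ} (h₁ : 1 ≤ a) (h₄ : a ≤ 4) : mods4 a = a := by unfold mods4; omega

theorem mods4_one_sub_add_mods4 (a : ℤ) : mods4 (1 - a) + mods4 a = 5 := by unfold mods4; omega

theorem isQ_cons {c : ℤ} {r : List ℤ} : IsQ (c :: r) ↔ (1 ≤ c ∧ c ≤ 4) ∧ IsQ r :=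
  List.forall_mem_cons

/-- The alternating sequence continuing after the symbol `p`. -/
def altFrom (p : ℤ) (L : ℕ) : List ℤ := (List.range L).map fun i : ℕ => mods4 (p + i + 1)

theorem altSeq_eq_altFrom_zero (T : ℕ) : altSeq T = altFrom 0 T := by
  refine List.map_congr_left fun i _ => ?_
  unfold mods4
  omega

theorem altFrom_congr {p q : ℤ} (h : p % 4 = q % 4) (L : ℕ) : altFrom p L = altFrom q L :=
  List.map_congr_left fun _ _ => mods4_congr (by omega)

theorem altFrom_add (p : ℤ) (L₁ L₂ : ℕ) :
    altFrom p (L₁ + L₂) = altFrom p L₁ ++ altFrom (p + L₁) L₂ := by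
  simp only [altFrom, List.range_add, List.map_append, List.map_map]
  congr 1
  refine List.map_congr_left fun i _ => mods4_congr ?_
  simp only [Nat.cast_add]
  ring_nf

theorem altFrom_succ (p : ℤ) (L : ℕ) : altFrom p (L + 1) = altFrom p L ++ [mods4 (p + L + 1)] := by
  simp [altFrom, List.range_succ]

/-- The length of the prefix of `altFrom p` that the greedy embedding of `x` uses. -/
def greedyTime (p : ℤ) : List ℤ → ℤ
  | [] => 0
  | c :: r => mods4 (c - p) + greedyTime c r

theorem greedyTime_nonneg (p : ℤ) (x : List ℤ) : 0 ≤ greedyTime p x := by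
  induction x generalizing p with
  | nil => exact le_rfl
  | cons c r ih =>
    have := mods4_mem_Icc (c - p)
    have := ih c
    simp only [greedyTime]
    omega

theorem exists_altFrom_mods4_sub_eq_append_singleton {p c : ℤ} (h₁ : 1 ≤ c) (h₄ : c ≤ 4) :
    ∃ pre, altFrom p (mods4 (c - p)).toNat = pre ++ [c] := by
  have hd := mods4_mem_Icc (c - p)
  have hmod := mods4_emod (c - p)
  obtain ⟨m, hm⟩ : ∃ m : ℕ, (mods4 (c - p)).toNat = m + 1 := ⟨(mods4 (c - p)).toNat - 1, by omega⟩
  refine ⟨altFrom p m, ?_⟩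
  rw [hm, altFrom_succ, mods4_congr (b := c) (by omega), mods4_of_mem_Icc h₁ h₄]

theorem sublist_altFrom_greedyTime {x : List ℤ} (hx : IsQ x) (p : ℤ) :
    x.Sublist (altFrom p (greedyTime p x).toNat) := by
  induction x generalizing p with
  | nil => exact List.nil_sublist _
  | cons c r ih =>
    obtain ⟨⟨hc₁, hc₄⟩, hr⟩ := isQ_cons.mp hx
    obtain ⟨pre, hpre⟩ := exists_altFrom_mods4_sub_eq_append_singleton (p := p) hc₁ hc₄
    have hd := mods4_mem_Icc (c - p)
    have hmod := mods4_emod (c - p)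
    have hrest := greedyTime_nonneg c r
    have hsplit : (greedyTime p (c :: r)).toNat =
        (mods4 (c - p)).toNat + (greedyTime c r).toNat := by
      simp only [greedyTime]
      omega
    rw [hsplit, altFrom_add, hpre, altFrom_congr (q := c) (by omega), List.append_assoc]
    exact ((ih hr c).cons_cons c).trans (List.sublist_append_right _ _)

theorem synTime_le_greedyTime {x : List ℤ} (hx : IsQ x) : (synTime x : ℤ) ≤ greedyTime 0 x := by
  have : synTime x ≤ (greedyTime 0 x).toNat := by
    apply Nat.sInf_le
    rw [Set.mem_ofPred_eq, altSeq_eq_altFrom_zero]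
    exact sublist_altFrom_greedyTime hx 0
  have := greedyTime_nonneg 0 x
  omega

/-- `reflect k x` replaces the `i`-th symbol `c` of `x` by `mods4 (k + i + 1 - c)`. -/
def reflect (k : ℤ) : List ℤ → List ℤ
  | [] => []
  | c :: r => mods4 (k + 1 - c) :: reflect (k + 1) r

theorem length_reflect (k : ℤ) (x : List ℤ) : (reflect k x).length = x.length := by
  induction x generalizing k with
  | nil => rfl
  | cons c r ih => simp [reflect, ih]

theorem isQ_reflect (k : ℤ) (x : List ℤ) : IsQ (reflect k x) := by
  induction x generalizing k with
  | nil => exact List.forall_mem_nil _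
  | cons c r ih => exact isQ_cons.mpr ⟨mods4_mem_Icc _, ih _⟩

theorem reflect_reflect (k : ℤ) {x : List ℤ} (hx : IsQ x) : reflect k (reflect k x) = x := by
  induction x generalizing k with
  | nil => rfl
  | cons c r ih =>
    obtain ⟨⟨hc₁, hc₄⟩, hr⟩ := isQ_cons.mp hx
    have hmod := mods4_emod (k + 1 - c)
    have hc : mods4 (k + 1 - mods4 (k + 1 - c)) = c := by
      rw [mods4_congr (b := c) (by omega), mods4_of_mem_Icc hc₁ hc₄]
    simp only [reflect, ih _ hr, hc]

/-- Each differential letter `d` of `x` (after `p`) becomes `5 - d` in `reflect k x` (after `q`). -/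
theorem greedyTime_reflect_add_greedyTime {p q k : ℤ} (hk : (p + q) % 4 = k % 4) (x : List ℤ) :
    greedyTime q (reflect k x) + greedyTime p x = 5 * x.length := by
  induction x generalizing p q k with
  | nil => rfl
  | cons c r ih =>
    have hmod := mods4_emod (k + 1 - c)
    have hstep : mods4 (mods4 (k + 1 - c) - q) + mods4 (c - p) = 5 := by
      rw [mods4_congr (b := 1 - (c - p)) (by omega)]
      exact mods4_one_sub_add_mods4 _
    have hrest := ih (p := c) (q := mods4 (k + 1 - c)) (k := k + 1) (by omega)
    simp only [greedyTime, reflect, List.length_cons, Nat.cast_succ]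
    linarith

noncomputable def quaternaryWords : ℕ → Finset (List ℤ)
  | 0 => {[]}
  | n + 1 => Finset.image₂ List.cons (Finset.Icc 1 4) (quaternaryWords n)

theorem mem_quaternaryWords {n : ℕ} {x : List ℤ} :
    x ∈ quaternaryWords n ↔ x.length = n ∧ IsQ x := by
  induction n generalizing x with
  | zero =>
    simp only [quaternaryWords, Finset.mem_singleton, List.length_eq_zero_iff,
      iff_self_and]
    rintro rfl
    exact List.forall_mem_nil _
  | succ n ih =>
    cases x with
    | nil => simp [quaternaryWords]
    | cons c r =>
      simp only [quaternaryWords, Finset.mem_image₂, Finset.mem_Icc, List.cons_eq_cons,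
        ↓existsAndEq, and_true, ih, List.length_cons, Nat.add_right_cancel_iff, isQ_cons]
      tauto

theorem card_quaternaryWords (n : ℕ) : (quaternaryWords n).card = 4 ^ n := by
  induction n with
  | zero => rfl
  | succ n ih =>
    rw [quaternaryWords, Finset.card_image₂ (fun _ _ _ _ h => List.cons_eq_cons.mp h), ih]
    simp [pow_succ, mul_comm]

theorem card_filter_greedyTime_le_A (n : ℕ) (T : ℤ) :
    ((quaternaryWords n).filter (greedyTime 0 · ≤ T)).card ≤ A n T := by
  rw [A, ← Set.ncard_coe_finset]
  refine Set.ncard_le_ncard (fun x hx => ?_) ((quaternaryWords n).finite_toSet.subset ?_)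
  · obtain ⟨hxQ, hxT⟩ := Finset.mem_filter.mp hx
    obtain ⟨hlen, hQ⟩ := mem_quaternaryWords.mp hxQ
    exact ⟨hlen, hQ, (synTime_le_greedyTime hQ).trans hxT⟩
  · exact fun x hx => mem_quaternaryWords.mpr ⟨hx.1, hx.2.1⟩

theorem A_ge_half_general (n : ℕ) (T : ℤ) (hT : (5 * n : ℤ) ≤ 2 * T) :
    4 ^ n ≤ 2 * A n T := by
  have hmaps : ∀ x ∈ quaternaryWords n, reflect 0 x ∈ quaternaryWords n := fun x hx =>
    mem_quaternaryWords.mpr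
      ⟨(length_reflect 0 x).trans (mem_quaternaryWords.mp hx).1, isQ_reflect 0 x⟩
  have hinvol : ∀ x ∈ quaternaryWords n, reflect 0 (reflect 0 x) = x := fun x hx =>
    reflect_reflect 0 (mem_quaternaryWords.mp hx).2
  have hcheap : ∀ x ∈ quaternaryWords n, ¬ greedyTime 0 x ≤ T → greedyTime 0 (reflect 0 x) ≤ T := by
    intro x hx hxT
    have hsum := greedyTime_reflect_add_greedyTime (p := 0) (q := 0) (k := 0) rfl x
    rw [(mem_quaternaryWords.mp hx).1] at hsum
    omega
  calc 4 ^ n = (quaternaryWords n).card := (card_quaternaryWords n).symm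
    _ ≤ 2 * ((quaternaryWords n).filter (greedyTime 0 · ≤ T)).card :=
      Finset.card_le_two_mul_card_filter_of_involutive _ hmaps hinvol hcheap
    _ ≤ 2 * A n T := Nat.mul_le_mul_left 2 (card_filter_greedyTime_le_A n T)

/-- if `2T ≥ 5n` then `A(n,T) ≥ 4^n / 2`: at least half of all
quaternary words of length `n` have synthesis time at most `T`. -/
theorem A_ge_half (n : ℕ) (hn : 0 < n) (T : ℤ) (hT : (5 * n : ℤ) ≤ 2 * T) :
    4 ^ n ≤ 2 * A n T :=
  A_ge_half_general n T hT
end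

section
/- For integers n ≥ 2, T, and k ∈ {1,2,3,4}, the map σ^{n,k}_T : W(n−1, T−k) → W(n,T), defined by σ^{n,k}_T(x_1,…,x_{n−1}) = (x_1,…,x_{n−1}, (x_{n−1}+k) mod* 4), is injective, its image is contained in W(n,T), and W(n,T) is the disjoint union over k = 1,2,3,4 of the images σ^{n,k}_T(W(n−1, T−k)). -/
/-- The map `σ^{n,k}_T`, appending `(x_{n-1} + k) mod* 4` to a word. -/
def sigmaMap (k : ℤ) (x : List ℤ) : List ℤ := x ++ [mods4 (x.getLastD 0 + k)]

/-!
Embed a quaternary word greedily into `1,2,3,4,1,2,…`: each symbol `x_i` is placed at the first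
later position carrying it, which lies `(x_i - x_{i-1}) mod* 4` steps after `x_{i-1}` (with
`x_0 = 0`). Greedy embedding is optimal, so `S(x) = ∑ (x_i - x_{i-1}) mod* 4`. Appending
`(x_{n-1} + k) mod* 4` therefore raises the synthesis time by exactly `k`, and every word of
length `n` arises this way from its prefix for exactly one `k ∈ {1,2,3,4}`.
-/

def altSeqFrom (s T : ℕ) : List ℤ :=
  (List.range T).map (fun i => (((i + s) % 4 : ℕ) : ℤ) + 1)

lemma altSeq_eq_altSeqFrom_zero (T : ℕ) : altSeq T = altSeqFrom 0 T := by
  simp [altSeq, altSeqFrom]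

lemma altSeqFrom_succ (s T : ℕ) :
    altSeqFrom s (T + 1) = (((s % 4 : ℕ) : ℤ) + 1) :: altSeqFrom (s + 1) T := by
  simp only [altSeqFrom, List.range_succ_eq_map, List.map_cons, List.map_map, Nat.zero_add]
  congr 1
  refine List.map_congr_left fun i _ => ?_
  simp only [Function.comp_apply]
  omega

/-- The length of the greedy embedding of `x` into the alternating sequence, when the symbol
just before it is `p`. -/
def greedyLength (p : ℤ) : List ℤ → ℤ
  | [] => 0
  | c :: r => mods4 (c - p) + greedyLength c r

lemma mods4_le_four (a : ℤ) : mods4 a ≤ 4 := by unfold mods4; omega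

lemma greedyLength_nonneg (p : ℤ) (x : List ℤ) : 0 ≤ greedyLength p x := by
  induction x generalizing p with
  | nil => exact le_rfl
  | cons c r ih => exact add_nonneg (zero_le_one.trans (one_le_mods4 _)) (ih c)

lemma greedyLength_congr {p q : ℤ} (h : p ≡ q [ZMOD 4]) (x : List ℤ) :
    greedyLength p x = greedyLength q x := by
  cases x with
  | nil => rfl
  | cons c r =>
    have : mods4 (c - p) = mods4 (c - q) := by
      unfold mods4; rw [Int.ModEq] at h; omega
    simp only [greedyLength, this]

lemma greedyLength_append (p : ℤ) (x : List ℤ) (b : ℤ) :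
    greedyLength p (x ++ [b]) = greedyLength p x + mods4 (b - x.getLastD p) := by
  induction x generalizing p with
  | nil => simp [greedyLength]
  | cons c r ih =>
    simp only [List.cons_append, greedyLength, List.getLastD_cons, ih c]
    ring

lemma sublist_altSeqFrom_iff {x : List ℤ} (hx : IsQ x) (s T : ℕ) :
    x.Sublist (altSeqFrom s T) ↔ greedyLength s x ≤ T := by
  induction T generalizing s x with
  | zero =>
    cases x with
    | nil => simp [greedyLength]
    | cons c r =>
      have := one_le_mods4 (c - s)
      have := greedyLength_nonneg c r
      simp only [altSeqFrom, List.range_zero, List.map_nil, List.sublist_nil, reduceCtorEq,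
        false_iff, not_le, greedyLength, Nat.cast_zero]
      omega
  | succ T ih =>
    cases x with
    | nil => simp only [List.nil_sublist, greedyLength, true_iff]; positivity
    | cons c r =>
      have hr : IsQ r := fun a ha => hx a (List.mem_cons_of_mem _ ha)
      have hc := hx c List.mem_cons_self
      have hcongr : mods4 (c - s) = 1 → greedyLength c r = greedyLength (s + 1) r := fun hm =>
        greedyLength_congr (by unfold mods4 at hm; rw [Int.ModEq]; omega) r
      have htake : (∃ r', c :: r = (((s % 4 : ℕ) : ℤ) + 1) :: r' ∧
          r'.Sublist (altSeqFrom (s + 1) T)) ↔ mods4 (c - s) = 1 ∧ greedyLength c r ≤ T := by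
        simp only [List.cons.injEq]
        constructor
        · rintro ⟨_, ⟨hcs, rfl⟩, h⟩
          have hm : mods4 (c - s) = 1 := by unfold mods4; omega
          exact ⟨hm, hcongr hm ▸ by simpa using (ih hr (s + 1)).1 h⟩
        · rintro ⟨hm, h⟩
          refine ⟨r, ⟨by unfold mods4 at hm; omega, rfl⟩, (ih hr (s + 1)).2 ?_⟩
          simpa [← hcongr hm] using h
      have hstep : mods4 (c - (s + 1)) = mods4 (c - s) - 1 ∨
          (mods4 (c - s) = 1 ∧ mods4 (c - (s + 1)) = 4) := by
        unfold mods4; omega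
      have := greedyLength_nonneg c r
      rw [altSeqFrom_succ, List.sublist_cons_iff, ih hx, htake]
      simp only [greedyLength, Nat.cast_add, Nat.cast_one]
      omega

lemma synTime_eq_greedyLength {x : List ℤ} (hx : IsQ x) :
    (synTime x : ℤ) = greedyLength 0 x := by
  have hset : {T : ℕ | x.Sublist (altSeq T)} = Set.Ici (greedyLength 0 x).toNat := by
    ext T
    have := sublist_altSeqFrom_iff hx 0 T
    simp only [Nat.cast_zero] at this
    simp only [Set.mem_ofPred_eq, Set.mem_Ici, altSeq_eq_altSeqFrom_zero, this]
    omega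
  rw [synTime, hset, csInf_Ici, Int.toNat_of_nonneg (greedyLength_nonneg 0 x)]

lemma isQ_append_singleton {x : List ℤ} (hx : IsQ x) {b : ℤ} (hb : 1 ≤ b ∧ b ≤ 4) :
    IsQ (x ++ [b]) := by
  intro a ha
  rcases List.mem_append.1 ha with h | h
  · exact hx a h
  · rw [List.mem_singleton.1 h]; exact hb

lemma synTime_append_singleton {x : List ℤ} (hx : IsQ x) {b : ℤ} (hb : 1 ≤ b ∧ b ≤ 4) :
    (synTime (x ++ [b]) : ℤ) = synTime x + mods4 (b - x.getLastD 0) := by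
  rw [synTime_eq_greedyLength (isQ_append_singleton hx hb), synTime_eq_greedyLength hx,
    greedyLength_append]

lemma isQ_sigmaMap (k : ℤ) {x : List ℤ} (hx : IsQ x) : IsQ (sigmaMap k x) :=
  isQ_append_singleton hx ⟨one_le_mods4 _, mods4_le_four _⟩

lemma synTime_sigmaMap {k : ℤ} (hk1 : 1 ≤ k) (hk4 : k ≤ 4) {x : List ℤ} (hx : IsQ x) :
    (synTime (sigmaMap k x) : ℤ) = synTime x + k := by
  rw [sigmaMap, synTime_append_singleton hx ⟨one_le_mods4 _, mods4_le_four _⟩]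
  unfold mods4
  omega

lemma sigmaMap_injective (k : ℤ) : Function.Injective (sigmaMap k) :=
  fun _ _ h => (List.append_inj' h rfl).1

lemma eq_of_sigmaMap_eq {k k' : ℤ} (hk : k ∈ Finset.Icc (1 : ℤ) 4)
    (hk' : k' ∈ Finset.Icc (1 : ℤ) 4) {x x' : List ℤ} (h : sigmaMap k x = sigmaMap k' x') :
    k = k' := by
  obtain ⟨rfl, hlast⟩ := List.append_inj' h rfl
  rw [Finset.mem_Icc] at hk hk'
  simp only [List.cons.injEq, and_true] at hlast
  unfold mods4 at hlast
  omega

lemma sigmaMap_mem_W {n : ℕ} {T k : ℤ} (hk1 : 1 ≤ k) (hk4 : k ≤ 4) {x : List ℤ}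
    (hx : x ∈ W n (T - k)) : sigmaMap k x ∈ W (n + 1) T := by
  obtain ⟨hlen, hq, hsyn⟩ := hx
  refine ⟨by simp [sigmaMap, hlen], isQ_sigmaMap k hq, ?_⟩
  rw [synTime_sigmaMap hk1 hk4 hq]
  linarith

lemma exists_sigmaMap_eq_of_mem_W {n : ℕ} {T : ℤ} {y : List ℤ} (hy : y ∈ W (n + 1) T) :
    ∃ k ∈ Finset.Icc (1 : ℤ) 4, ∃ x ∈ W n (T - k), sigmaMap k x = y := by
  obtain ⟨hlen, hq, hsyn⟩ := hy
  obtain ⟨x, b, rfl⟩ := (List.eq_nil_or_concat' y).resolve_left (by rintro rfl; simp at hlen)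
  have hx : IsQ x := fun a ha => hq a (List.mem_append_left _ ha)
  have hb : 1 ≤ b ∧ b ≤ 4 := hq b (by simp)
  refine ⟨mods4 (b - x.getLastD 0), Finset.mem_Icc.2 ⟨one_le_mods4 _, mods4_le_four _⟩, x,
    ⟨by simpa using hlen, hx, ?_⟩, ?_⟩
  · rw [synTime_append_singleton hx hb] at hsyn
    linarith
  · rw [sigmaMap]
    congr
    unfold mods4
    omega

/-- for `n ≥ 2` and `k ∈ {1,2,3,4}`, the map `σ^{n,k}_T` is injective
on `W(n-1,T-k)`, maps it into `W(n,T)`, and `W(n,T)` is the disjoint union of the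
four images. -/
theorem sigmaMap_partition (n : ℕ) (hn : 2 ≤ n) (T : ℤ) :
    (∀ k : ℤ, 1 ≤ k → k ≤ 4 →
      Set.InjOn (sigmaMap k) (W (n - 1) (T - k)) ∧
      sigmaMap k '' W (n - 1) (T - k) ⊆ W n T) ∧
    (W n T = ⋃ k ∈ Finset.Icc (1 : ℤ) 4, sigmaMap k '' W (n - 1) (T - k)) ∧
    (∀ k ∈ Finset.Icc (1 : ℤ) 4, ∀ k' ∈ Finset.Icc (1 : ℤ) 4, k ≠ k' →
      Disjoint (sigmaMap k '' W (n - 1) (T - k)) (sigmaMap k' '' W (n - 1) (T - k'))) := by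
  obtain ⟨m, rfl⟩ : ∃ m, n = m + 1 := ⟨n - 1, by omega⟩
  simp only [Nat.add_sub_cancel]
  refine ⟨fun k hk1 hk4 => ⟨(sigmaMap_injective k).injOn,
    Set.image_subset_iff.2 fun x hx => sigmaMap_mem_W hk1 hk4 hx⟩, ?_, ?_⟩
  · ext y
    simp only [Set.mem_iUnion, Set.mem_image, exists_prop]
    refine ⟨exists_sigmaMap_eq_of_mem_W, ?_⟩
    rintro ⟨k, hk, x, hx, rfl⟩
    rw [Finset.mem_Icc] at hk
    exact sigmaMap_mem_W hk.1 hk.2 hx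
  · intro k hk k' hk' hne
    refine Set.disjoint_left.2 ?_
    rintro _ ⟨x, -, rfl⟩ ⟨x', -, h⟩
    exact hne (eq_of_sigmaMap_eq hk' hk h).symm
end

section
/- For every integer n ≥ 2 and every integer T, A(n,T) = A(n−1, T−1) + A(n−1, T−2) + A(n−1, T−3) + A(n−1, T−4). -/
/-!
Matching a quaternary word greedily against `1,2,3,4,1,2,…`, each symbol `c` that follows the
symbol `p` is placed `mods4 (c - p)` positions after it (with `p = 0` before the first symbol), and
the greedy embedding is optimal; so the synthesis time of `x` is the sum of its differential word.
A word of length `n` whose first symbol is `c` is `c` followed by a word of length `n - 1` shifted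
cyclically by `c`, and the shift does not change the differential word of that tail. Hence `W n T`
is the disjoint union over `c ∈ {1,2,3,4}` of copies of `W (n - 1) (T - c)`.
-/

namespace Quaternary

lemma mods4_mem_Icc (a : ℤ) : 1 ≤ mods4 a ∧ mods4 a ≤ 4 := by unfold mods4; omega

lemma mods4_emod (a : ℤ) : mods4 a % 4 = a % 4 := by unfold mods4; omega

lemma mods4_congr {a b : ℤ} (h : a % 4 = b % 4) : mods4 a = mods4 b := by unfold mods4; omega

lemma mods4_of_mem_Icc {a : ℤ} (h : 1 ≤ a ∧ a ≤ 4) : mods4 a = a := by unfold mods4; omega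

/-- `diffSum 0 x` is the sum of `diffWord x`. -/
def diffSum : ℤ → List ℤ → ℤ
  | _, [] => 0
  | p, c :: y => mods4 (c - p) + diffSum c y

lemma diffSum_nonneg (p : ℤ) (x : List ℤ) : 0 ≤ diffSum p x := by
  induction x generalizing p with
  | nil => exact le_rfl
  | cons c y ih =>
    have := mods4_mem_Icc (c - p)
    have := ih c
    simp only [diffSum]
    omega

lemma diffSum_congr {p q : ℤ} (h : p % 4 = q % 4) (x : List ℤ) : diffSum p x = diffSum q x := by
  cases x with
  | nil => rfl
  | cons c y => simp only [diffSum, mods4_congr (by omega : (c - p) % 4 = (c - q) % 4)]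

def shift (s : ℤ) (x : List ℤ) : List ℤ := x.map fun a => mods4 (a + s)

lemma length_shift (s : ℤ) (x : List ℤ) : (shift s x).length = x.length := List.length_map _

lemma isQ_shift (s : ℤ) (x : List ℤ) : IsQ (shift s x) := by
  intro a ha
  obtain ⟨b, -, rfl⟩ := List.mem_map.mp ha
  exact mods4_mem_Icc _

lemma shift_shift {s t : ℤ} (hst : (s + t) % 4 = 0) {x : List ℤ} (hx : IsQ x) :
    shift t (shift s x) = x := by
  rw [shift, shift, List.map_map]
  refine (List.map_congr_left fun a ha => ?_).trans (List.map_id' x)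
  have := mods4_emod (a + s)
  rw [Function.comp_apply, mods4_congr (b := a) (by omega), mods4_of_mem_Icc (hx a ha)]

lemma diffSum_shift {p q s : ℤ} (hpq : p % 4 = (q + s) % 4) (x : List ℤ) :
    diffSum p (shift s x) = diffSum q x := by
  induction x generalizing p q with
  | nil => rfl
  | cons a y ih =>
    have := mods4_emod (a + s)
    simp only [shift, List.map_cons, diffSum] at ih ⊢
    rw [mods4_congr (b := a - q) (by omega), ih this]

def altSeqFrom (p : ℤ) (L : ℕ) : List ℤ := (List.range L).map fun i : ℕ => mods4 (p + 1 + i)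

lemma altSeq_eq_altSeqFrom (T : ℕ) : altSeq T = altSeqFrom 0 T := by
  unfold altSeq altSeqFrom
  refine List.map_congr_left fun i _ => ?_
  unfold mods4
  push_cast
  omega

lemma altSeqFrom_succ (p : ℤ) (L : ℕ) :
    altSeqFrom p (L + 1) = mods4 (p + 1) :: altSeqFrom (p + 1) L := by
  rw [altSeqFrom, List.range_succ_eq_map, List.map_cons, List.map_map]
  congr 2
  · simp
  · ext i
    simp only [Function.comp_apply, Nat.cast_succ]
    ring_nf

lemma cons_sublist_cons_of_ne {α : Type*} {a b : α} {l l' : List α} (h : a ≠ b) :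
    (a :: l).Sublist (b :: l') ↔ (a :: l).Sublist l' := by
  simp [List.sublist_cons_iff, h]

theorem sublist_altSeqFrom_iff {x : List ℤ} (hx : IsQ x) (p : ℤ) (L : ℕ) :
    x.Sublist (altSeqFrom p L) ↔ diffSum p x ≤ L := by
  induction L generalizing x p with
  | zero =>
    cases x with
    | nil => simp [diffSum]
    | cons c y =>
      have := mods4_mem_Icc (c - p)
      have := diffSum_nonneg c y
      simp only [altSeqFrom, List.range_zero, List.map_nil, List.sublist_nil, reduceCtorEq,
        false_iff, diffSum, Nat.cast_zero]
      omega
  | succ L ih =>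
    cases x with
    | nil => simpa [diffSum] using L.cast_nonneg.trans (by simp)
    | cons c y =>
      obtain ⟨hc, hy⟩ := List.forall_mem_cons.mp hx
      have hcp := mods4_mem_Icc (c - p)
      rw [altSeqFrom_succ, diffSum, Nat.cast_succ]
      by_cases hnext : c = mods4 (p + 1)
      · have hcong : c % 4 = (p + 1) % 4 := hnext ▸ mods4_emod (p + 1)
        have hone : mods4 (c - p) = 1 := by
          rw [mods4_congr (b := 1) (by omega)]
          rfl
        rw [← hnext, List.cons_sublist_cons, ih hy, diffSum_congr hcong, hone]
        omega
      · have hstep : mods4 (c - (p + 1)) = mods4 (c - p) - 1 := by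
          rw [← mods4_of_mem_Icc hc] at hnext
          unfold mods4 at hnext ⊢
          omega
        rw [cons_sublist_cons_of_ne hnext, ih hx, diffSum, hstep]
        omega

theorem synTime_eq_diffSum {x : List ℤ} (hx : IsQ x) : (synTime x : ℤ) = diffSum 0 x := by
  have hnonneg := diffSum_nonneg 0 x
  have hset : {T : ℕ | x.Sublist (altSeq T)} = Set.Ici (diffSum 0 x).toNat := by
    ext T
    simp only [Set.mem_ofPred_eq, Set.mem_Ici, altSeq_eq_altSeqFrom, sublist_altSeqFrom_iff hx]
    omega
  rw [synTime, hset, csInf_Ici]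
  omega

lemma mem_W_iff {n : ℕ} {T : ℤ} {x : List ℤ} :
    x ∈ W n T ↔ x.length = n ∧ IsQ x ∧ diffSum 0 x ≤ T := by
  refine and_congr_right fun _ => ⟨fun ⟨hx, hT⟩ => ?_, fun ⟨hx, hT⟩ => ?_⟩
  · exact ⟨hx, synTime_eq_diffSum hx ▸ hT⟩
  · exact ⟨hx, (synTime_eq_diffSum hx).symm ▸ hT⟩

lemma W_finite (n : ℕ) (T : ℤ) : (W n T).Finite := by
  refine (altSeq T.toNat).sublists.toFinset.finite_toSet.subset fun x hx => ?_
  obtain ⟨-, hx, hT⟩ := mem_W_iff.mp hx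
  have := diffSum_nonneg 0 x
  rw [List.coe_toFinset, Set.mem_ofPred_eq, List.mem_sublists, altSeq_eq_altSeqFrom,
    sublist_altSeqFrom_iff hx]
  omega

lemma diffSum_cons_shift {c : ℤ} (hc : 1 ≤ c ∧ c ≤ 4) (y : List ℤ) :
    diffSum 0 (c :: shift c y) = c + diffSum 0 y := by
  rw [diffSum, sub_zero, mods4_of_mem_Icc hc, diffSum_shift (by simp : c % 4 = (0 + c) % 4)]

lemma injOn_cons_shift (c : ℤ) : Set.InjOn (fun y => c :: shift c y) {y | IsQ y} := by
  intro y hy z hz h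
  have hcancel : (c + -c) % 4 = 0 := by simp
  rw [← shift_shift hcancel hy, ← shift_shift hcancel hz, (List.cons.inj h).2]

lemma W_succ_eq_biUnion (m : ℕ) (T : ℤ) :
    W (m + 1) T = ⋃ c ∈ Set.Icc (1 : ℤ) 4, (fun y => c :: shift c y) '' W m (T - c) := by
  ext x
  simp only [Set.mem_iUnion, Set.mem_image, Set.mem_Icc, mem_W_iff]
  constructor
  · rintro ⟨hlen, hx, hT⟩
    obtain ⟨c, y, rfl⟩ := List.exists_cons_of_length_eq_add_one hlen
    obtain ⟨hc, hy⟩ := List.forall_mem_cons.mp hx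
    have hy_eq : shift c (shift (-c) y) = y := shift_shift (by simp) hy
    have := diffSum_cons_shift hc (shift (-c) y)
    refine ⟨c, hc, shift (-c) y, ⟨?_, isQ_shift _ _, ?_⟩, by rw [hy_eq]⟩
    · simpa [length_shift] using hlen
    · rw [hy_eq] at this
      omega
  · rintro ⟨c, hc, y, ⟨hlen, -, hT⟩, rfl⟩
    refine ⟨by simp [length_shift, hlen], List.forall_mem_cons.mpr ⟨hc, isQ_shift c y⟩, ?_⟩
    rw [diffSum_cons_shift hc]
    omega

theorem A_succ (m : ℕ) (T : ℤ) : A (m + 1) T = ∑ c ∈ Finset.Icc (1 : ℤ) 4, A m (T - c) := by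
  have hdisj : (Set.Icc (1 : ℤ) 4).PairwiseDisjoint
      fun c => (fun y => c :: shift c y) '' W m (T - c) := by
    intro c _ d _ hcd
    refine Set.disjoint_left.mpr ?_
    rintro _ ⟨y, -, rfl⟩ ⟨z, -, h⟩
    exact hcd (List.cons.inj h).1.symm
  rw [A, W_succ_eq_biUnion, (Set.finite_Icc 1 4).ncard_biUnion
    (fun c _ => (W_finite m _).image _) hdisj, ← Finset.coe_Icc, finsum_mem_coe_finset]
  exact Finset.sum_congr rfl fun c _ =>
    ((injOn_cons_shift c).mono fun y hy => (mem_W_iff.mp hy).2.1).ncard_image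

end Quaternary

/-- the recursion `A(n,T) = ∑_{k=1}^{4} A(n-1, T-k)`. -/
theorem A_recursion (n : ℕ) (hn : 2 ≤ n) (T : ℤ) :
    A n T = A (n - 1) (T - 1) + A (n - 1) (T - 2) + A (n - 1) (T - 3) + A (n - 1) (T - 4) := by
  obtain ⟨m, rfl⟩ : ∃ m, n = m + 1 := ⟨n - 1, by omega⟩
  rw [Nat.add_sub_cancel, Quaternary.A_succ, show Finset.Icc (1 : ℤ) 4 = {1, 2, 3, 4} from rfl]
  simp [add_assoc]
end

section
/- Fix a positive integer n. For all integers ℓ with 2 ≤ ℓ ≤ n, all integers T, all a ∈ ℤ_n, and all b, α ∈ {1,2,3,4}, the set W_n(ℓ,T,a,b,α) is the disjoint union over i = 1,2,3,4 of the sets W_n(ℓ−1, T−c_i, a − 𝟙[α ≥ i]·(ℓ−1) mod n, (b−α) mod* 4, i) ∘ α, where c_i = (α − i) mod* 4, 𝟙[α ≥ i] equals 1 if α ≥ i and 0 otherwise, and C ∘ α denotes the set of words of C with the symbol α appended. -/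
/-- The set `W_n(ℓ,T,a,b,α)` of quaternary words of length `ℓ` ending in `α`,
with synthesis time at most `T`, VT syndrome `a (mod n)` and sum `b` (shifted mod 4). -/
def Wfull (n ℓ : ℕ) (T : ℤ) (a : ZMod n) (b α : ℤ) : Set (List ℤ) :=
  {x | x.length = ℓ ∧ IsQ x ∧ x.getLast? = some α ∧ (synTime x : ℤ) ≤ T ∧
       ((vtSyn (auxSeq x) : ℕ) : ZMod n) = a ∧ mods4 x.sum = b}

/-! A word of `W_n(ℓ,T,a,b,α)` is `y ++ [α]` for a word `y` ending in some `i`. In a shortest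
embedding of `y` into the alternating sequence, the last symbol of `y` sits at position
`S(y) ≡ i (mod 4)`, and the next occurrence of `α` after it is `(α - i) mod* 4` positions later;
hence `S(y ++ [α]) = S(y) + (α - i) mod* 4`. Appending `α` also adds the bit `𝟙[i ≤ α]` at
position `ℓ - 1` of the auxiliary sequence and adds `α` to the symbol sum, which accounts for the
other two parameters. -/

theorem List.concat_sublist_concat_iff {α : Type*} {y l : List α} {a c : α} :
    (y ++ [a]).Sublist (l ++ [c]) ↔ (y ++ [a]).Sublist l ∨ (a = c ∧ y.Sublist l) := by
  constructor
  · intro h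
    obtain ⟨l₁, l₂, hyl, h₁, h₂⟩ := List.sublist_append_iff.1 h
    rcases List.sublist_singleton.1 h₂ with rfl | rfl
    · exact .inl (by simpa [hyl] using h₁)
    · obtain ⟨rfl, hac⟩ := List.append_inj' hyl rfl
      exact .inr ⟨List.singleton_inj.1 hac, h₁⟩
  · rintro (h | ⟨rfl, h⟩)
    · exact h.trans (List.sublist_append_left _ _)
    · exact h.append (List.Sublist.refl _)

theorem altSeq_succ (T : ℕ) : altSeq (T + 1) = altSeq T ++ [mods4 ((T : ℤ) + 1)] := by
  simp only [altSeq, List.range_succ, List.map_append, List.map_cons, List.map_nil, mods4]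
  congr 3
  omega

theorem altSeq_sublist_of_le {s t : ℕ} (h : s ≤ t) : (altSeq s).Sublist (altSeq t) :=
  (List.range_sublist.2 h).map _

theorem concat_sublist_altSeq_iff {y : List ℤ} {a : ℤ} {T : ℕ} :
    (y ++ [a]).Sublist (altSeq T) ↔ ∃ t < T, mods4 ((t : ℤ) + 1) = a ∧ y.Sublist (altSeq t) := by
  induction T with
  | zero => simp [altSeq]
  | succ T ih =>
    rw [altSeq_succ, List.concat_sublist_concat_iff, ih]
    constructor
    · rintro (⟨t, ht, h⟩ | ⟨rfl, h⟩)
      · exact ⟨t, by omega, h⟩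
      · exact ⟨T, by omega, rfl, h⟩
    · rintro ⟨t, ht, h⟩
      rcases Nat.lt_succ_iff_lt_or_eq.1 ht with ht | rfl
      · exact .inl ⟨t, ht, h⟩
      · exact .inr ⟨h.1.symm, h.2⟩

theorem sublist_altSeq_four_mul_length {x : List ℤ} (hx : IsQ x) :
    x.Sublist (altSeq (4 * x.length)) := by
  induction x using List.reverseRecOn with
  | nil => simp
  | append_singleton y a ih =>
    have ha := hx a (by simp)
    refine concat_sublist_altSeq_iff.2 ⟨4 * y.length + (a - 1).toNat, ?_, ?_, ?_⟩
    · simp only [List.length_append, List.length_singleton]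
      omega
    · simp only [mods4]
      omega
    · exact (ih fun c hc => hx c (List.mem_append_left _ hc)).trans
        (altSeq_sublist_of_le (by omega))

theorem IsQ.concat {y : List ℤ} {a : ℤ} (hy : IsQ y) (ha : 1 ≤ a ∧ a ≤ 4) :
    IsQ (y ++ [a]) := by
  intro c hc
  rcases List.mem_append.1 hc with hc | hc
  · exact hy c hc
  · exact List.mem_singleton.1 hc ▸ ha

theorem synTime_le_iff {x : List ℤ} (hx : IsQ x) (T : ℕ) :
    synTime x ≤ T ↔ x.Sublist (altSeq T) := by
  refine ⟨fun h => ?_, fun h => Nat.sInf_le h⟩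
  have hmem : x.Sublist (altSeq (synTime x)) :=
    Nat.sInf_mem (s := {T | x.Sublist (altSeq T)}) ⟨_, sublist_altSeq_four_mul_length hx⟩
  exact hmem.trans (altSeq_sublist_of_le h)

theorem synTime_concat_emod {z : List ℤ} {i : ℤ} (hx : IsQ (z ++ [i])) :
    (synTime (z ++ [i]) : ℤ) % 4 = i % 4 := by
  obtain ⟨t, ht, hti, hz⟩ := concat_sublist_altSeq_iff.1 ((synTime_le_iff hx _).1 le_rfl)
  have hle : synTime (z ++ [i]) ≤ t + 1 :=
    (synTime_le_iff hx _).2 (concat_sublist_altSeq_iff.2 ⟨t, by omega, hti, hz⟩)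
  simp only [mods4] at hti
  omega

theorem synTime_concat {y : List ℤ} {i a : ℤ} (hy : IsQ y) (hyi : y.getLast? = some i)
    (ha : 1 ≤ a ∧ a ≤ 4) : (synTime (y ++ [a]) : ℤ) = synTime y + mods4 (a - i) := by
  have hya := hy.concat ha
  have hs : (synTime y : ℤ) % 4 = i % 4 := by
    obtain ⟨z, rfl⟩ := List.getLast?_eq_some_iff.1 hyi
    exact synTime_concat_emod hy
  obtain ⟨c, hc⟩ : ∃ c : ℕ, (c : ℤ) = mods4 (a - i) :=
    ⟨_, Int.toNat_of_nonneg (by simp only [mods4]; omega)⟩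
  rw [← hc]
  simp only [mods4] at hc
  apply le_antisymm
  · have h := (synTime_le_iff hya (synTime y + c)).2 <| concat_sublist_altSeq_iff.2
      ⟨synTime y + c - 1, by omega, by simp only [mods4]; omega,
        (synTime_le_iff hy _).1 (by omega)⟩
    omega
  · obtain ⟨t, ht, hta, hyt⟩ :=
      concat_sublist_altSeq_iff.1 ((synTime_le_iff hya _).1 le_rfl)
    have := (synTime_le_iff hy t).2 hyt
    simp only [mods4] at hta
    omega

theorem auxSeq_concat :
    ∀ (y : List ℤ) {i : ℤ} (a : ℤ), y.getLast? = some i →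
      auxSeq (y ++ [a]) = auxSeq y ++ [if i ≤ a then 1 else 0]
  | [], _, _, h => by simp at h
  | [b], _, _, h => by
    obtain rfl : b = _ := Option.some_injective _ h
    simp [auxSeq]
  | b :: c :: l, _, a, h => by
    have ih := auxSeq_concat (c :: l) a (by rwa [List.getLast?_cons_cons] at h)
    change (if b ≤ c then 1 else 0) :: auxSeq (c :: l ++ [a]) = _
    rw [ih]
    rfl

theorem vtSyn_concat (w : List ℕ) (u : ℕ) :
    vtSyn (w ++ [u]) = vtSyn w + (w.length + 1) * u := by
  unfold vtSyn
  rw [List.length_append, List.length_singleton, Finset.sum_range_succ]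
  congr 1
  · exact Finset.sum_congr rfl fun k hk =>
      congrArg _ (List.getD_append _ _ _ _ (List.mem_range.1 hk))
  · simp

theorem vtSyn_auxSeq_concat {n : ℕ} {y : List ℤ} {i a : ℤ} (hyi : y.getLast? = some i) :
    ((vtSyn (auxSeq (y ++ [a])) : ℕ) : ZMod n) =
      vtSyn (auxSeq y) + if i ≤ a then (y.length : ZMod n) else 0 := by
  have hlen : (auxSeq y).length + 1 = y.length := by
    obtain ⟨z, rfl⟩ := List.getLast?_eq_some_iff.1 hyi
    simp [auxSeq]
  rw [auxSeq_concat y a hyi, vtSyn_concat, hlen]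
  split_ifs <;> simp

theorem mods4_add_eq_iff {s a b : ℤ} (hb : 1 ≤ b ∧ b ≤ 4) :
    mods4 (s + a) = b ↔ mods4 s = mods4 (b - a) := by
  simp only [mods4]
  omega

theorem concat_mem_Wfull_iff {n ℓ : ℕ} {T : ℤ} {c : ZMod n} {b a i : ℤ} {y : List ℤ}
    (hb : 1 ≤ b ∧ b ≤ 4) (ha : 1 ≤ a ∧ a ≤ 4) (hy : IsQ y) (hyi : y.getLast? = some i) :
    y ++ [a] ∈ Wfull n ℓ T c b a ↔
      y ∈ Wfull n (ℓ - 1) (T - mods4 (a - i))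
        (c - if i ≤ a then ((ℓ - 1 : ℕ) : ZMod n) else 0) (mods4 (b - a)) i := by
  have hy₀ : y.length ≠ 0 := by rintro h; simp [List.length_eq_zero_iff.1 h] at hyi
  have hlen : (y ++ [a]).length = ℓ ↔ y.length = ℓ - 1 := by
    simp only [List.length_append, List.length_singleton]
    omega
  have hya := hy.concat ha
  have hvt (h : y.length = ℓ - 1) :
      ((vtSyn (auxSeq (y ++ [a])) : ℕ) : ZMod n) = c ↔
        ((vtSyn (auxSeq y) : ℕ) : ZMod n) = c - if i ≤ a then ((ℓ - 1 : ℕ) : ZMod n) else 0 := by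
    rw [vtSyn_auxSeq_concat hyi, h, eq_sub_iff_add_eq]
  simp only [Wfull, Set.mem_ofPred_eq, List.getLast?_concat, List.sum_append, List.sum_singleton,
    synTime_concat hy hyi ha, mods4_add_eq_iff hb, hlen, hy, hya, hyi, true_and]
  constructor
  · rintro ⟨hl, hT, hv, hs⟩
    exact ⟨hl, by omega, (hvt hl).1 hv, hs⟩
  · rintro ⟨hl, hT, hv, hs⟩
    exact ⟨hl, by omega, (hvt hl).2 hv, hs⟩

theorem Wfull_disjoint_of_ne {n n' ℓ ℓ' : ℕ} {T T' : ℤ} {c : ZMod n} {c' : ZMod n'}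
    {b b' a a' : ℤ} (h : a ≠ a') : Disjoint (Wfull n ℓ T c b a) (Wfull n' ℓ' T' c' b' a') :=
  Set.disjoint_left.2 fun _ hx hx' => h (Option.some_injective _ (hx.2.2.1.symm.trans hx'.2.2.1))

theorem Wfull_recursion_general (n : ℕ) (ℓ : ℕ) (hℓ2 : 2 ≤ ℓ)
    (T : ℤ) (a : ZMod n) (b α : ℤ)
    (hb : 1 ≤ b ∧ b ≤ 4) (hα : 1 ≤ α ∧ α ≤ 4) :
    (Wfull n ℓ T a b α =
      ⋃ i ∈ Finset.Icc (1 : ℤ) 4,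
        (fun x => x ++ [α]) ''
          Wfull n (ℓ - 1) (T - mods4 (α - i))
            (a - (if i ≤ α then ((ℓ - 1 : ℕ) : ZMod n) else 0)) (mods4 (b - α)) i) ∧
    (∀ i ∈ Finset.Icc (1 : ℤ) 4, ∀ i' ∈ Finset.Icc (1 : ℤ) 4, i ≠ i' →
      Disjoint
        ((fun x => x ++ [α]) ''
          Wfull n (ℓ - 1) (T - mods4 (α - i))
            (a - (if i ≤ α then ((ℓ - 1 : ℕ) : ZMod n) else 0)) (mods4 (b - α)) i)
        ((fun x => x ++ [α]) ''
          Wfull n (ℓ - 1) (T - mods4 (α - i'))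
            (a - (if i' ≤ α then ((ℓ - 1 : ℕ) : ZMod n) else 0)) (mods4 (b - α)) i')) := by
  refine ⟨Set.ext fun x => ?_, fun i _ i' _ hii' => ?_⟩
  · simp only [Set.mem_iUnion, Set.mem_image, Finset.mem_Icc, exists_prop]
    constructor
    · intro hx
      obtain ⟨y, rfl⟩ := List.getLast?_eq_some_iff.1 hx.2.2.1
      obtain ⟨z, i, rfl⟩ := (List.eq_nil_or_concat' y).resolve_left fun h => by
        have hlen := hx.1
        simp only [h, List.nil_append, List.length_singleton] at hlen
        omega
      have hy : IsQ (z ++ [i]) := fun c hc => hx.2.1 c (List.mem_append_left _ hc)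
      exact ⟨i, hy i (by simp), _, (concat_mem_Wfull_iff hb hα hy (by simp)).1 hx, rfl⟩
    · rintro ⟨i, -, y, hy, rfl⟩
      exact (concat_mem_Wfull_iff hb hα hy.2.1 hy.2.2.1).2 hy
  · rw [Set.disjoint_image_iff (List.append_left_injective [α])]
    exact Wfull_disjoint_of_ne hii'

/-- the recursion expressing `W_n(ℓ,T,a,b,α)` as the disjoint union,
over `i = 1,2,3,4`, of `W_n(ℓ-1, T - c_i, a - 𝟙[α ≥ i](ℓ-1), (b-α) mod* 4, i) ∘ α`,
where `c_i = (α - i) mod* 4`. -/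
theorem Wfull_recursion (n : ℕ) (hn : 0 < n) (ℓ : ℕ) (hℓ2 : 2 ≤ ℓ) (hℓn : ℓ ≤ n)
    (T : ℤ) (a : ZMod n) (b α : ℤ)
    (hb : 1 ≤ b ∧ b ≤ 4) (hα : 1 ≤ α ∧ α ≤ 4) :
    (Wfull n ℓ T a b α =
      ⋃ i ∈ Finset.Icc (1 : ℤ) 4,
        (fun x => x ++ [α]) ''
          Wfull n (ℓ - 1) (T - mods4 (α - i))
            (a - (if i ≤ α then ((ℓ - 1 : ℕ) : ZMod n) else 0)) (mods4 (b - α)) i) ∧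
    (∀ i ∈ Finset.Icc (1 : ℤ) 4, ∀ i' ∈ Finset.Icc (1 : ℤ) 4, i ≠ i' →
      Disjoint
        ((fun x => x ++ [α]) ''
          Wfull n (ℓ - 1) (T - mods4 (α - i))
            (a - (if i ≤ α then ((ℓ - 1 : ℕ) : ZMod n) else 0)) (mods4 (b - α)) i)
        ((fun x => x ++ [α]) ''
          Wfull n (ℓ - 1) (T - mods4 (α - i'))
            (a - (if i' ≤ α then ((ℓ - 1 : ℕ) : ZMod n) else 0)) (mods4 (b - α)) i')) :=
  Wfull_recursion_general n ℓ hℓ2 T a b α hb hα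
end
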